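/- For a = (a₁,…,a_n) ∈ (ℂ*)ⁿ, the kernel of the joint evaluation ev_a : OA → sl₂ⁿ, X ↦ (ev_{a₁}(X),…,ev_{a_n}(X)), equals I_{U_a(t)} where U_a(t) = ∏_{distinct values a among the a_j} U_a(t); and ev_a is surjective if and only if a_j ≠ ±1 for all j and a_j ≠ a_k^{±1} for all j ≠ k. -/

import Mathlib

open LaurentPolynomial

noncomputable section

namespace Onsager

attribute [local instance 100] LieRing.ofAssociativeRing

/-- Laurent polynomials over ℂ, i.e. the ring `ℂ[t,t⁻¹]`. -/
abbrev R : Type := LaurentPolynomial ℂ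

/-- The involution `t ↦ t⁻¹` of `ℂ[t,t⁻¹]`. -/
abbrev inv : R ≃ₐ[ℂ] R := LaurentPolynomial.invert

/-- The loop algebra of `gl₂`: 2×2 matrices over `ℂ[t,t⁻¹]`.  The loop algebra
`L(sl₂) = ℂ[t,t⁻¹] ⊗ sl₂` is its Lie subalgebra of traceless matrices. -/
abbrev Loop : Type := Matrix (Fin 2) (Fin 2) R

/-- The standard generator `e` of `sl₂`, viewed inside the loop algebra. -/
def e : Loop := !![0, 1; 0, 0]
/-- The standard generator `f` of `sl₂`. -/
def f : Loop := !![0, 0; 1, 0]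
/-- The standard generator `h` of `sl₂`. -/
def h : Loop := !![1, 0; 0, -1]

/-- The element `p(t)e + q(t)f + r(t)h` of the loop algebra. -/
def elt (p q r : R) : Loop := p • e + q • f + r • h

lemma elt_eq (p q r : R) : elt p q r = !![r, p; q, -r] := by
  ext i j
  fin_cases i <;> fin_cases j <;> simp [elt, e, f, h]

/-- The swap matrix implementing the involution `θ` of `sl₂`. -/
def Sw : Loop := !![0, 1; 1, 0]

/-- The involution `θ̂` of the loop algebra, `θ̂(p(t) ⊗ x) = p(t⁻¹) ⊗ θ(x)`,
where `θ(e) = f`, `θ(f) = e`, `θ(h) = -h`. -/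
def thetaHat (x : Loop) : Loop := Sw * x.map inv * Sw

lemma Sw_mul_Sw : Sw * Sw = 1 := by
  ext i j
  fin_cases i <;> fin_cases j <;>
    simp [Sw, Matrix.mul_apply, Fin.sum_univ_two, Matrix.one_apply]

lemma map_inv_eq (x : Loop) : x.map inv = (AlgEquiv.mapMatrix (R := ℂ) inv) x := rfl

lemma thetaHat_mul (x y : Loop) : thetaHat (x * y) = thetaHat x * thetaHat y := by
  simp only [thetaHat, map_inv_eq, map_mul]
  calc Sw * (inv.mapMatrix x * inv.mapMatrix y) * Sw
      = Sw * inv.mapMatrix x * (Sw * Sw) * (inv.mapMatrix y * Sw) := by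
        rw [Sw_mul_Sw]; noncomm_ring
    _ = Sw * inv.mapMatrix x * Sw * (Sw * (inv.mapMatrix y * Sw)) := by noncomm_ring
    _ = _ := by noncomm_ring

lemma thetaHat_add (x y : Loop) : thetaHat (x + y) = thetaHat x + thetaHat y := by
  simp only [thetaHat, map_inv_eq, map_add, mul_add, add_mul]

lemma thetaHat_sub (x y : Loop) : thetaHat (x - y) = thetaHat x - thetaHat y := by
  simp only [thetaHat, map_inv_eq, map_sub, mul_sub, sub_mul]

lemma thetaHat_smul (c : ℂ) (x : Loop) : thetaHat (c • x) = c • thetaHat x := by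
  simp only [thetaHat, map_inv_eq, map_smul, Matrix.smul_mul, Matrix.mul_smul]

/-- The Onsager algebra, realized as the subalgebra of the loop algebra of `sl₂`
fixed by the involution `θ̂`. -/
def OASub : LieSubalgebra ℂ Loop where
  carrier := {x | thetaHat x = x ∧ Matrix.trace x = 0}
  add_mem' := by
    rintro x y ⟨hx1, hx2⟩ ⟨hy1, hy2⟩
    exact ⟨by rw [thetaHat_add, hx1, hy1], by simp [hx2, hy2]⟩
  zero_mem' := by
    constructor
    · have := thetaHat_smul 0 0
      simpa using this
    · simp
  smul_mem' := by
    rintro c x ⟨hx1, hx2⟩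
    exact ⟨by rw [thetaHat_smul, hx1], by simp [hx2]⟩
  lie_mem' := by
    rintro x y ⟨hx1, hx2⟩ ⟨hy1, hy2⟩
    constructor
    · rw [Ring.lie_def, thetaHat_sub, thetaHat_mul, thetaHat_mul, hx1, hy1]
    · rw [Ring.lie_def]
      simp [Matrix.trace_mul_comm x y]

/-- The Onsager algebra as a type (a Lie algebra over ℂ). -/
abbrev OA : Type := ↥OASub

/-- For a polynomial `P(t)`, the ideal `I_P` of the Onsager algebra consisting of the
elements `p(t)e + p(t⁻¹)f + q(t)h` with `P | p` and `P | q`. -/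
def IP (P : Polynomial ℂ) : LieIdeal ℂ OA where
  carrier := {X | ∀ i j, P.toLaurent ∣ (X : Loop) i j}
  add_mem' := by
    intro x y hx hy i j
    simpa using dvd_add (hx i j) (hy i j)
  zero_mem' := by intro i j; simp
  smul_mem' := by
    intro c x hx i j
    have : ((c • x : OA) : Loop) i j = c • ((x : Loop) i j) := rfl
    rw [this, Algebra.smul_def]
    exact (hx i j).mul_left _
  lie_mem := by
    intro x m hm i j
    have hco : ((⁅x, m⁆ : OA) : Loop) = ⁅(x : Loop), (m : Loop)⁆ := rfl
    rw [hco, Ring.lie_def]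
    have h1 : P.toLaurent ∣ ((x : Loop) * (m : Loop)) i j := by
      rw [Matrix.mul_apply]
      exact Finset.dvd_sum fun k _ => (hm k j).mul_left _
    have h2 : P.toLaurent ∣ ((m : Loop) * (x : Loop)) i j := by
      rw [Matrix.mul_apply]
      exact Finset.dvd_sum fun k _ => (hm i k).mul_right _
    simpa using dvd_sub h1 h2

/-- A nonconstant monic polynomial `P` of degree `d` is *reciprocal* if
`P(t) = ± t^d P(t⁻¹)`. -/
def IsReciprocal (P : Polynomial ℂ) : Prop :=
  P.Monic ∧ 0 < P.natDegree ∧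
    (P.toLaurent = T (P.natDegree : ℤ) * inv P.toLaurent ∨
     P.toLaurent = -(T (P.natDegree : ℤ) * inv P.toLaurent))

/-- The elementary reciprocal polynomial `U_a`. -/
def U (a : ℂ) : Polynomial ℂ :=
  if a = 1 ∨ a = -1 then Polynomial.X - Polynomial.C a
  else Polynomial.X ^ 2 - Polynomial.C (a + a⁻¹) * Polynomial.X + 1

/-- Evaluation of a Laurent polynomial at a nonzero complex number. -/
def evalL (a : ℂ) (p : R) : ℂ := p.coeff.sum fun n c => c * a ^ n

/-- Evaluation `ev_a` of loop-algebra elements at `t = a`. -/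
def ev (a : ℂ) (x : Loop) : Matrix (Fin 2) (Fin 2) ℂ := x.map (evalL a)

/-- The element `A_m = 2t^m e + 2t^{-m} f` of the loop algebra. -/
def AmL (m : ℤ) : Loop := elt (2 * T m) (2 * T (-m)) 0

/-- The element `G_m = (t^m - t^{-m}) h` of the loop algebra. -/
def GmL (m : ℤ) : Loop := elt 0 0 (T m - T (-m))

lemma thetaHat_elt (p q r : R) :
    thetaHat (elt p q r) = elt (inv q) (inv p) (-(inv r)) := by
  rw [elt_eq, elt_eq]
  have hmap : (!![r, p; q, -r] : Loop).map ⇑inv = !![inv r, inv p; inv q, -(inv r)] := by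
    ext i j
    fin_cases i <;> fin_cases j <;> simp [Matrix.map_apply]
  rw [thetaHat, hmap, Sw]
  ext i j
  fin_cases i <;> fin_cases j <;>
    simp [Matrix.mul_apply, Fin.sum_univ_two]

lemma elt_mem (p r : R) (hr : inv r = -r) : elt p (inv p) r ∈ OASub := by
  constructor
  · rw [thetaHat_elt, hr, neg_neg, LaurentPolynomial.involutive_invert p]
  · rw [elt_eq]
    simp [Matrix.trace_fin_two]

/-- `A_m` as an element of the Onsager algebra. -/
def Am (m : ℤ) : OA :=
  ⟨AmL m, by
    have h2 : inv (2 * T m : R) = 2 * T (-m) := by simp [map_ofNat]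
    have hm := elt_mem (2 * T m) 0 (by simp)
    rw [h2] at hm
    exact hm⟩

/-- `G_m` as an element of the Onsager algebra. -/
def Gm (m : ℤ) : OA :=
  ⟨GmL m, by
    have hm := elt_mem 0 (T m - T (-m)) (by simp [neg_sub])
    rw [map_zero] at hm
    exact hm⟩

/-!
Evaluation at `a ≠ 0` is a ring homomorphism on `ℂ[t,t⁻¹]`, and the `θ̂`-symmetry of
`X ∈ OA` says that the entries of `X` at `t = a⁻¹` are the diagonally opposite entries at
`t = a`. Hence `X` lies in the joint kernel iff every entry vanishes at all `a_j^{±1}`, i.e.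
(after clearing a power of `t`) is divisible by `U_a`, the product of the pairwise coprime,
squarefree polynomials `U_{a_j}` with roots `a_j^{±1}`.

For surjectivity, the `h`-coefficient of `X ∈ OA` takes opposite values at `a` and `a⁻¹`, so
prescribing `h` at one node and `0` at the others is impossible if `a_j = ±1` or
`a_j = a_k^{±1}`. Conversely, when the `2n` nodes `a_j^{±1}` are distinct, Lagrange
interpolation gives `p, s` with prescribed values there, and
`p(t)e + p(t⁻¹)f + (s(t) - s(t⁻¹))h` realizes any traceless tuple.
-/

open Function

lemma evalL_eq_eval₂ {a : ℂ} (ha : a ≠ 0) (p : R) :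
    evalL a p = eval₂ (RingHom.id ℂ) (Units.mk0 a ha) p := by
  induction p using LaurentPolynomial.induction_on' with
  | add p q hp hq =>
    rw [map_add, ← hp, ← hq]
    simp only [evalL, AddMonoidAlgebra.coeff_add]
    exact Finsupp.sum_add_index' (fun _ => zero_mul _) fun _ _ _ => add_mul _ _ _
  | C_mul_T n r =>
    rw [eval₂_C_mul_T, ← single_eq_C_mul_T]
    simp [evalL, -single_eq_C_mul_T]

lemma evalL_neg {a : ℂ} (ha : a ≠ 0) (p : R) : evalL a (-p) = -evalL a p := by
  simp only [evalL_eq_eval₂ ha, map_neg]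

lemma evalL_toLaurent {a : ℂ} (ha : a ≠ 0) (P : Polynomial ℂ) :
    evalL a (Polynomial.toLaurent P) = P.eval a := by
  rw [evalL_eq_eval₂ ha, eval₂_toLaurent, Polynomial.eval₂_id, Units.val_mk0]

lemma evalL_invert {a : ℂ} (ha : a ≠ 0) (p : R) : evalL a (inv p) = evalL a⁻¹ p := by
  rw [evalL_eq_eval₂ ha, evalL_eq_eval₂ (inv_ne_zero ha)]
  induction p using LaurentPolynomial.induction_on' with
  | add p q hp hq => simp only [map_add, hp, hq]
  | C_mul_T n r => simp

lemma evalL_eq_zero_of_toLaurent_dvd {a : ℂ} (ha : a ≠ 0) {P : Polynomial ℂ}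
    (hP : P.eval a = 0) {q : R} (hq : Polynomial.toLaurent P ∣ q) : evalL a q = 0 := by
  obtain ⟨s, rfl⟩ := hq
  rw [evalL_eq_eval₂ ha, map_mul, ← evalL_eq_eval₂ ha, evalL_toLaurent ha, hP, zero_mul]

lemma toLaurent_dvd_of_dvd {S : Type*} [CommSemiring S] {P r : Polynomial S}
    {q : LaurentPolynomial S} {k : ℤ} (hr : Polynomial.toLaurent r = q * T k) (hP : P ∣ r) :
    Polynomial.toLaurent P ∣ q := by
  rw [← (isUnit_T k).dvd_mul_right, ← hr]
  exact map_dvd _ hP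

lemma U_eq_X_sub_C_mul {a : ℂ} (ha : a ≠ 0) (h : ¬(a = 1 ∨ a = -1)) :
    U a = (Polynomial.X - Polynomial.C a) * (Polynomial.X - Polynomial.C a⁻¹) := by
  have hC : Polynomial.C a * Polynomial.C a⁻¹ = 1 := by rw [← map_mul, mul_inv_cancel₀ ha, map_one]
  rw [U, if_neg h, map_add]
  linear_combination (-1 : Polynomial ℂ) * hC

lemma U_inv (a : ℂ) : U a⁻¹ = U a := by
  by_cases h : a = 1 ∨ a = -1
  · rcases h with rfl | rfl <;> norm_num
  · have h' : ¬(a⁻¹ = 1 ∨ a⁻¹ = -1) := by rwa [inv_eq_one, inv_eq_iff_eq_inv, inv_neg, inv_one]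
    rw [U, U, if_neg h, if_neg h', inv_inv, add_comm a⁻¹ a]

lemma U_eval_eq_zero_iff {a : ℂ} (ha : a ≠ 0) (z : ℂ) :
    (U a).eval z = 0 ↔ z = a ∨ z = a⁻¹ := by
  by_cases h : a = 1 ∨ a = -1
  · have hinv : a⁻¹ = a := by rcases h with rfl | rfl <;> norm_num
    simp [U, if_pos h, sub_eq_zero, hinv]
  · simp [U_eq_X_sub_C_mul ha h, sub_eq_zero]

lemma U_dvd_of_eval_eq_zero {a : ℂ} (ha : a ≠ 0) {r : Polynomial ℂ} (h₁ : r.eval a = 0)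
    (h₂ : r.eval a⁻¹ = 0) : U a ∣ r := by
  by_cases h : a = 1 ∨ a = -1
  · rw [U, if_pos h]
    exact Polynomial.dvd_iff_isRoot.2 h₁
  · have hne : a ≠ a⁻¹ := fun hc => h (mul_self_eq_one_iff.1 (by
      nth_rw 1 [hc]
      exact inv_mul_cancel₀ ha))
    rw [U_eq_X_sub_C_mul ha h]
    exact (Polynomial.isCoprime_X_sub_C_of_isUnit_sub (sub_ne_zero.2 hne).isUnit).mul_dvd
      (Polynomial.dvd_iff_isRoot.2 h₁) (Polynomial.dvd_iff_isRoot.2 h₂)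

lemma isCoprime_U {a b : ℂ} (ha : a ≠ 0) (hb : b ≠ 0) (hab : b ≠ a) (hab' : b ≠ a⁻¹) :
    IsCoprime (U a) (U b) := by
  refine (Polynomial.isCoprime_iff_aeval_ne_zero_of_isAlgClosed ℂ ℂ _ _).2 fun z => ?_
  simp only [Polynomial.coe_aeval_eq_eval, ne_eq, U_eval_eq_zero_iff ha, U_eval_eq_zero_iff hb]
  by_contra! hz
  rcases hz with ⟨rfl | rfl, h | h⟩
  · exact hab h.symm
  · exact hab' (by rw [h, inv_inv])
  · exact hab' h.symm
  · exact hab (inv_injective h).symm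

section Ua

variable {ι : Type*} [Fintype ι] {a : ι → ℂ}

/-- The polynomial `U_a(t)`, the product of the distinct `U_{a_j}(t)`. -/
def Ua (a : ι → ℂ) : Polynomial ℂ := (Finset.image (fun j => U (a j)) Finset.univ).prod id

lemma U_dvd_Ua (j : ι) : U (a j) ∣ Ua a :=
  Finset.dvd_prod_of_mem id (Finset.mem_image_of_mem _ (Finset.mem_univ j))

lemma Ua_dvd_of_eval_eq_zero (ha : ∀ j, a j ≠ 0) {r : Polynomial ℂ}
    (hr : ∀ j, r.eval (a j) = 0 ∧ r.eval (a j)⁻¹ = 0) : Ua a ∣ r := by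
  refine Finset.prod_dvd_of_coprime ?_ ?_
  · simp only [Finset.coe_image, Finset.coe_univ, Set.image_univ]
    rintro _ ⟨j, rfl⟩ _ ⟨k, rfl⟩ hjk
    exact isCoprime_U (ha j) (ha k) (fun h => hjk (by simp only [h]))
      (fun h => hjk (by simp only [h, U_inv]))
  · simp only [Finset.mem_image, Finset.mem_univ, true_and]
    rintro _ ⟨j, rfl⟩
    exact U_dvd_of_eval_eq_zero (ha j) (hr j).1 (hr j).2

lemma toLaurent_Ua_dvd_iff (ha : ∀ j, a j ≠ 0) {q : R} :
    Polynomial.toLaurent (Ua a) ∣ q ↔ ∀ j, evalL (a j) q = 0 ∧ evalL (a j)⁻¹ q = 0 := by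
  constructor
  · intro hq j
    have hroot : ∀ z, z = a j ∨ z = (a j)⁻¹ → (Ua a).eval z = 0 := fun z hz =>
      Polynomial.eval_eq_zero_of_dvd_of_eval_eq_zero (U_dvd_Ua j)
        ((U_eval_eq_zero_iff (ha j) z).2 hz)
    exact ⟨evalL_eq_zero_of_toLaurent_dvd (ha j) (hroot _ (.inl rfl)) hq,
      evalL_eq_zero_of_toLaurent_dvd (inv_ne_zero (ha j)) (hroot _ (.inr rfl)) hq⟩
  · intro hq
    obtain ⟨k, r, hr⟩ := exists_T_pow q
    have hroot : ∀ z, z ≠ 0 → evalL z q = 0 → r.eval z = 0 := fun z hz hqz => by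
      rw [← evalL_toLaurent hz, hr, evalL_eq_eval₂ hz, map_mul, ← evalL_eq_eval₂ hz, hqz,
        zero_mul]
    exact toLaurent_dvd_of_dvd hr (Ua_dvd_of_eval_eq_zero ha fun j =>
      ⟨hroot _ (ha j) (hq j).1, hroot _ (inv_ne_zero (ha j)) (hq j).2⟩)

end Ua

lemma thetaHat_apply (x : Loop) (i j : Fin 2) : thetaHat x i j = inv (x (i + 1) (j + 1)) := by
  fin_cases i <;> fin_cases j <;>
    simp [thetaHat, Sw, Matrix.mul_apply, Fin.sum_univ_two, Matrix.vecMul, dotProduct]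

lemma inv_apply_of_mem {X : Loop} (hX : X ∈ OASub) (i j : Fin 2) :
    inv (X i j) = X (i + 1) (j + 1) := by
  have h := congrFun₂ hX.1 (i + 1) (j + 1)
  have hadd : ∀ m : Fin 2, m + 1 + 1 = m := by decide
  rwa [thetaHat_apply, hadd, hadd] at h

lemma evalL_inv_apply_of_mem {X : Loop} (hX : X ∈ OASub) {a : ℂ} (ha : a ≠ 0) (i j : Fin 2) :
    evalL a⁻¹ (X i j) = evalL a (X (i + 1) (j + 1)) := by
  rw [← evalL_invert ha, inv_apply_of_mem hX]

lemma apply_one_one_of_mem {X : Loop} (hX : X ∈ OASub) : X 1 1 = -X 0 0 := by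
  have htr := hX.2
  rw [Matrix.trace_fin_two] at htr
  linear_combination htr

lemma evalL_inv_apply_zero_zero_of_mem {X : Loop} (hX : X ∈ OASub) {a : ℂ} (ha : a ≠ 0) :
    evalL a⁻¹ (X 0 0) = -evalL a (X 0 0) := by
  rw [evalL_inv_apply_of_mem hX ha, show (0 : Fin 2) + 1 = 1 from rfl, apply_one_one_of_mem hX,
    evalL_neg ha]

lemma ev_eq_zero_iff (a : ℂ) (x : Loop) : ev a x = 0 ↔ ∀ i j, evalL a (x i j) = 0 := by
  simp [ev, ← Matrix.ext_iff]

lemma trace_ev_of_mem {X : Loop} (hX : X ∈ OASub) {a : ℂ} (ha : a ≠ 0) :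
    Matrix.trace (ev a X) = 0 := by
  simp [Matrix.trace_fin_two, ev, apply_one_one_of_mem hX, evalL_neg ha]

lemma ev_elt {a : ℂ} (ha : a ≠ 0) (p q r : R) :
    ev a (elt p q r) = !![evalL a r, evalL a p; evalL a q, -evalL a r] := by
  rw [elt_eq]
  ext i j
  fin_cases i <;> fin_cases j <;> simp [ev, evalL_neg ha]

section JointEvaluation

variable {ι : Type*} {a : ι → ℂ}

theorem forall_ev_eq_zero_iff_mem_IP [Fintype ι] (ha : ∀ j, a j ≠ 0) (X : OA) :
    (∀ j, ev (a j) (X : Loop) = 0) ↔ X ∈ IP (Ua a) := by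
  change _ ↔ ∀ i j, Polynomial.toLaurent (Ua a) ∣ (X : Loop) i j
  simp only [ev_eq_zero_iff, toLaurent_Ua_dvd_iff ha, evalL_inv_apply_of_mem X.2 (ha _)]
  exact ⟨fun h i j k => ⟨h k i j, h k _ _⟩, fun h k i j => (h i j k).1⟩

lemma injective_sumElim_inv (ha : ∀ j, a j ≠ 0) (h₁ : ∀ j, a j ≠ 1 ∧ a j ≠ -1)
    (h₂ : ∀ j k, j ≠ k → a j ≠ a k ∧ a j ≠ (a k)⁻¹) :
    Injective (Sum.elim a fun j => (a j)⁻¹) := by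
  have hinj : Injective a := fun j k hjk => by_contra fun hne => (h₂ j k hne).1 hjk
  refine Sum.elim_injective.2 ⟨hinj, inv_injective.comp hinj, fun j k hjk => ?_⟩
  rcases eq_or_ne j k with rfl | hne
  · have hsq : a j * a j = 1 := by
      nth_rw 1 [hjk]
      exact inv_mul_cancel₀ (ha j)
    rcases mul_self_eq_one_iff.1 hsq with h | h
    exacts [(h₁ j).1 h, (h₁ j).2 h]
  · exact (h₂ j k hne).2 hjk

lemma exists_evalL_eq [Finite ι] (ha : ∀ j, a j ≠ 0)
    (hinj : Injective (Sum.elim a fun j => (a j)⁻¹)) (u w : ι → ℂ) :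
    ∃ p : R, ∀ j, evalL (a j) p = u j ∧ evalL (a j)⁻¹ p = w j := by
  obtain ⟨P, hP⟩ := (Polynomial.exists_eval_eq_iff _ (Sum.elim u w)).2
    fun i j hij => congrArg (Sum.elim u w) (hinj hij)
  exact ⟨Polynomial.toLaurent P, fun j =>
    ⟨(evalL_toLaurent (ha j) P).trans (hP (.inl j)),
      (evalL_toLaurent (inv_ne_zero (ha j)) P).trans (hP (.inr j))⟩⟩

lemma exists_ev_eq [Finite ι] (ha : ∀ j, a j ≠ 0)
    (hinj : Injective (Sum.elim a fun j => (a j)⁻¹)) (v : ι → Matrix (Fin 2) (Fin 2) ℂ)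
    (hv : ∀ j, Matrix.trace (v j) = 0) : ∃ X : OA, ∀ j, ev (a j) (X : Loop) = v j := by
  obtain ⟨p, hp⟩ := exists_evalL_eq ha hinj (fun j => v j 0 1) (fun j => v j 1 0)
  obtain ⟨s, hs⟩ := exists_evalL_eq ha hinj (fun j => v j 0 0) 0
  have hr : inv (s - inv s) = -(s - inv s) := by
    rw [map_sub, LaurentPolynomial.involutive_invert s, neg_sub]
  refine ⟨⟨elt p (inv p) (s - inv s), elt_mem p _ hr⟩, fun j => ?_⟩
  have h11 : v j 1 1 = -v j 0 0 := by
    have := hv j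
    rw [Matrix.trace_fin_two] at this
    linear_combination this
  rw [ev_elt (ha j), evalL_eq_eval₂ (ha j), map_sub, ← evalL_eq_eval₂ (ha j),
    ← evalL_eq_eval₂ (ha j), evalL_invert (ha j), evalL_invert (ha j), (hp j).1, (hp j).2,
    (hs j).1, (hs j).2, Pi.zero_apply, sub_zero, ← h11]
  exact (Matrix.eta_fin_two (v j)).symm

lemma conditions_of_forall_exists_ev_eq (ha : ∀ j, a j ≠ 0)
    (hsurj : ∀ v : ι → Matrix (Fin 2) (Fin 2) ℂ, (∀ j, Matrix.trace (v j) = 0) →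
      ∃ X : OA, ∀ j, ev (a j) (X : Loop) = v j) :
    (∀ j, a j ≠ 1 ∧ a j ≠ -1) ∧ ∀ j k, j ≠ k → a j ≠ a k ∧ a j ≠ (a k)⁻¹ := by
  classical
  have hpeak : ∀ j, ∃ X : OA,
      evalL (a j) ((X : Loop) 0 0) = 1 ∧ ∀ k, k ≠ j → evalL (a k) ((X : Loop) 0 0) = 0 := by
    intro j
    obtain ⟨X, hX⟩ := hsurj (Pi.single j !![1, 0; 0, -1]) fun k => by
      rcases eq_or_ne k j with rfl | hk
      · simp [Matrix.trace_fin_two]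
      · simp [hk]
    refine ⟨X, by simpa [ev] using congrFun₂ (hX j) 0 0, fun k hk => ?_⟩
    simpa [ev, hk] using congrFun₂ (hX k) 0 0
  have hself : ∀ j, a j ≠ (a j)⁻¹ := fun j hj => by
    obtain ⟨X, hX, -⟩ := hpeak j
    have h := evalL_inv_apply_zero_zero_of_mem X.2 (ha j)
    rw [← hj, hX] at h
    norm_num at h
  refine ⟨fun j => ⟨fun h => hself j (by rw [h, inv_one]),
    fun h => hself j (by rw [h, inv_neg, inv_one])⟩, fun j k hjk => ⟨fun h => ?_, fun h => ?_⟩⟩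
  all_goals obtain ⟨X, hXj, hXk⟩ := hpeak j
  · rw [h, hXk k hjk.symm] at hXj
    exact zero_ne_one hXj
  · rw [h, evalL_inv_apply_zero_zero_of_mem X.2 (ha k), hXk k hjk.symm, neg_zero] at hXj
    exact zero_ne_one hXj

theorem range_ev_eq_iff [Finite ι] (ha : ∀ j, a j ≠ 0) :
    Set.range (fun (X : OA) (j : ι) => ev (a j) (X : Loop)) =
        {v : ι → Matrix (Fin 2) (Fin 2) ℂ | ∀ j, Matrix.trace (v j) = 0} ↔
      (∀ j, a j ≠ 1 ∧ a j ≠ -1) ∧ ∀ j k, j ≠ k → a j ≠ a k ∧ a j ≠ (a k)⁻¹ := by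
  constructor
  · refine fun hrange => conditions_of_forall_exists_ev_eq ha fun v hv => ?_
    obtain ⟨X, hX⟩ : v ∈ Set.range _ := by rwa [hrange]
    exact ⟨X, congrFun hX⟩
  · rintro ⟨h₁, h₂⟩
    ext v
    constructor
    · rintro ⟨X, rfl⟩ j
      exact trace_ev_of_mem X.2 (ha j)
    · intro hv
      obtain ⟨X, hX⟩ := exists_ev_eq ha (injective_sumElim_inv ha h₁ h₂) v hv
      exact ⟨X, funext hX⟩

end JointEvaluation

/-- **Lemma 13 of Date–Roan.**  For `a = (a₁,…,aₙ) ∈ (ℂ*)ⁿ`, the kernel of the joint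
evaluation `ev_a : OA → sl₂ⁿ` equals `I_{U_a}`, where `U_a` is the product of the
distinct elementary reciprocal polynomials `U_{aⱼ}` (each reciprocal pair counted
once); and `ev_a` is surjective onto `sl₂ⁿ` (the tuples of traceless matrices) if and
only if `aⱼ ≠ ±1` for all `j` and `aⱼ ≠ a_k^{±1}` for `j ≠ k`. -/
theorem joint_eval_kernel_and_surjectivity (n : ℕ) (a : Fin n → ℂ)
    (ha : ∀ j, a j ≠ 0) :
    (∀ X : OA, (∀ j, ev (a j) (X : Loop) = 0) ↔
        X ∈ IP ((Finset.image (fun j => U (a j)) Finset.univ).prod id)) ∧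
    ((Set.range (fun (X : OA) (j : Fin n) => ev (a j) (X : Loop)) =
        {v : Fin n → Matrix (Fin 2) (Fin 2) ℂ | ∀ j, Matrix.trace (v j) = 0}) ↔
      ((∀ j, a j ≠ 1 ∧ a j ≠ -1) ∧
        ∀ j k, j ≠ k → a j ≠ a k ∧ a j ≠ (a k)⁻¹)) :=
  ⟨forall_ev_eq_zero_iff_mem_IP ha, range_ev_eq_iff ha⟩

end Onsager
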